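/- arXiv:1911.12554 — 2 statements merged into one kernel-verified Lean document; each statement's English description precedes it below -/
import Mathlib

section
/- Writing Q² = 1 − λ², the matrix G from the diagonalizing transformation satisfies G⁻¹ ( (1/2)[[−Q, λ m],[−λ m, Q]] ) G − G⁻¹ G_x = −(Q/2)√(m²+1) σ₃ + (i m_x)/(2(m²+1)) σ₁ + (m/(2k√(m²+1))) [[−im, 1],[−1, im]] when λ = λ(k), Q = Q(k). -/
set_option maxHeartbeats 4000000
open Matrix

/-- The diagonalizing matrix `G` built from the value `m`. -/
noncomputable def Gmat (m : ℝ) : Matrix (Fin 2) (Fin 2) ℂ :=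
  (Real.sqrt ((Real.sqrt (m^2+1) + 1) / (2 * Real.sqrt (m^2+1))) : ℂ) •
    !![1, -Complex.I * m / (Real.sqrt (m^2+1) + 1);
       -Complex.I * m / (Real.sqrt (m^2+1) + 1), 1]

noncomputable def pauli1 : Matrix (Fin 2) (Fin 2) ℂ := !![0, 1; 1, 0]
noncomputable def pauli3 : Matrix (Fin 2) (Fin 2) ℂ := !![1, 0; 0, -1]

noncomputable def Qfun (k : ℂ) : ℂ := (Complex.I / 2) * (k - 1/k)
noncomputable def lamfun (k : ℂ) : ℂ := (1/2 : ℂ) * (k + 1/k)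

theorem keylemma (cM cM' cs cF cgv cdf cdg k : ℂ) (hk : k ≠ 0) (hs0 : cs ≠ 0)
    (cr0 : cF^2 + cgv^2 = 1)
    (cr3 : (cF^2 - cgv^2)*cs = 1)
    (cr4 : 2*cs*(cF*cgv) = cM)
    (cr1 : cF*cdf + cgv*cdg = 0)
    (cr2 : 2*cs^2*(cF*cdg - cgv*cdf) = cM')
    (cs2 : cs^2 = cM^2+1) :
    !![cF, Complex.I*cgv; Complex.I*cgv, cF] *
      ((1/2 : ℂ) • !![-Qfun k, lamfun k * cM; -lamfun k * cM, Qfun k]) *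
      !![cF, -Complex.I*cgv; -Complex.I*cgv, cF]
      - !![cF, Complex.I*cgv; Complex.I*cgv, cF] * !![cdf, -Complex.I*cdg; -Complex.I*cdg, cdf]
    = (-(Qfun k / 2) * cs) • pauli3
      + ((Complex.I * cM') / (2 * (cM^2 + 1)) : ℂ) • pauli1
      + (cM / (2 * k * cs)) • !![-Complex.I * cM, 1; -1, Complex.I * cM] := by
  have hI : Complex.I ^ 2 = -1 := Complex.I_sq
  have hki : k * k⁻¹ = 1 := mul_inv_cancel₀ hk
  rw [← cs2]
  ext i j
  fin_cases i <;> fin_cases j <;>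
    simp [Matrix.mul_apply, Fin.sum_univ_two, Qfun, lamfun, pauli1, pauli3, Matrix.smul_apply] <;>
    field_simp
  · linear_combination (-Complex.I*(k^2-1)*cgv^2*cs + 4*k*cgv*cdg*cs) * hI + (-4*k*cs) * cr1 + (-Complex.I*(k^2-1)) * cr3 + (-Complex.I*(k^2+1)*cM) * cr4 + (Complex.I*(k^2-1)) * cs2
  · linear_combination ((2*(k^2-1)*cF*cgv + (k^2+1)*cM*cgv^2)*cs^2) * hI + (2*Complex.I*k) * cr2 + ((k^2+1)*cM*cs) * cr3 + (-(k^2-1)*cs) * cr4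
  · linear_combination ((-2*(k^2-1)*cF*cgv - (k^2+1)*cM*cgv^2)*cs^2) * hI + (2*Complex.I*k) * cr2 + (-(k^2+1)*cM*cs) * cr3 + ((k^2-1)*cs) * cr4
  · linear_combination (Complex.I*(k^2-1)*cgv^2*cs + 4*k*cgv*cdg*cs) * hI + (-4*k*cs) * cr1 + (Complex.I*(k^2-1)) * cr3 + (Complex.I*(k^2+1)*cM) * cr4 + (-Complex.I*(k^2-1)) * cs2

/-- The gauge transformation by `G` brings the `x`-part of the Lax pair to the
form `−(Q/2)√(m²+1) σ₃ + (i m_x)/(2(m²+1)) σ₁ + (m/(2k√(m²+1))) [[−im,1],[−1,im]]`. -/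
theorem gauge_transformed_Lax (m : ℝ → ℝ) (hm : ContDiff ℝ (⊤ : ℕ∞) m)
    (G : ℝ → Matrix (Fin 2) (Fin 2) ℂ) (hG : G = fun x => Gmat (m x))
    (Gx : ℝ → Matrix (Fin 2) (Fin 2) ℂ)
    (hGx : Gx = fun x => Matrix.of fun i j => deriv (fun x' => G x' i j) x)
    (k : ℂ) (hk : k ≠ 0) (x : ℝ) :
    (G x)⁻¹ * ((1/2 : ℂ) • !![-Qfun k, lamfun k * (m x);
                              -lamfun k * (m x), Qfun k]) * G x
      - (G x)⁻¹ * Gx x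
    = (-(Qfun k / 2) * (Real.sqrt ((m x)^2 + 1) : ℂ)) • pauli3
      + ((Complex.I * deriv m x) / (2 * ((m x)^2 + 1)) : ℂ) • pauli1
      + ((m x : ℂ) / (2 * k * (Real.sqrt ((m x)^2 + 1) : ℂ))) •
          !![-Complex.I * (m x), 1; -1, Complex.I * (m x)] := by
  have hmd : DifferentiableAt ℝ m x := (hm.differentiable (by simp)).differentiableAt
  have hm' : HasDerivAt m (deriv m x) x := hmd.hasDerivAt
  set M := m x with hM
  set M' := deriv m x with hM'
  have hsq : HasDerivAt (fun x' => m x' ^ 2 + 1) (2*M*M') x := by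
    have := (hm'.pow 2).add_const 1
    exact this.congr_deriv (by rw [hM]; norm_num)
  set s := Real.sqrt (M^2+1) with hs
  have hspos : 0 < s := Real.sqrt_pos.2 (by positivity)
  have hs2 : s^2 = M^2+1 := Real.sq_sqrt (by positivity)
  have hsD : HasDerivAt (fun x' => Real.sqrt (m x' ^ 2 + 1)) (M*M'/s) x := by
    have h := hsq.sqrt (by positivity)
    convert h using 1
    rw [← hs]; field_simp
  set F := Real.sqrt ((s+1)/(2*s)) with hF
  have hFpos : 0 < F := Real.sqrt_pos.2 (by positivity)
  have hF2 : 2*s*F^2 = s+1 := by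
    rw [hF, Real.sq_sqrt (by positivity)]; field_simp
  set df := -(M*M')/(4*s^3*F) with hdf
  have hfD : HasDerivAt (fun x' => Real.sqrt ((Real.sqrt (m x' ^ 2 + 1) + 1) / (2 * Real.sqrt (m x' ^ 2 + 1)))) df x := by
    have h := ((hsD.add_const 1).div (hsD.const_mul 2) (by positivity)).sqrt
      (by positivity : (Real.sqrt (m x ^ 2 + 1) + 1) / (2 * Real.sqrt (m x ^ 2 + 1)) ≠ 0)
    convert h using 1
    rfl
    simp only [Pi.div_apply]
    rw [← hs, ← hF, hdf]
    field_simp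
    ring
  set gv := F*M/(s+1) with hgv
  set dg := ((df*M + F*M') * (s+1) - F*M*(M*M'/s)) / (s+1)^2 with hdg
  have hgD : HasDerivAt (fun x' => Real.sqrt ((Real.sqrt (m x' ^ 2 + 1) + 1) / (2 * Real.sqrt (m x' ^ 2 + 1))) * m x' / (Real.sqrt (m x' ^ 2 + 1) + 1)) dg x := by
    have h := (hfD.mul hm').div (hsD.add_const 1) (by positivity)
    convert h using 1
    all_goals rfl
  have hs1 : (0:ℝ) < s + 1 := by linarith
  -- real scalar identities
  have r0 : F^2 + gv^2 = 1 := by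
    rw [hgv]; field_simp
    linear_combination (F^2*s + 1 - F^2 + s - 3*s*F^2)*hs2 + (s*(s+1) - M^2)*hF2
  have r3 : (F^2 - gv^2) * s = 1 := by
    rw [hgv]; field_simp
    linear_combination (-F^2*s + 1 + s)*hs2 + (s*(s+1) - M^2)*hF2
  have r4 : 2*s*(F*gv) = M := by
    rw [hgv]; field_simp
    linear_combination M*hF2
  have r1 : F*df + gv*dg = 0 := by
    rw [hgv, hdg, hdf]; field_simp
    linear_combination M*M'*((s+1)*2*s^2 - 2*s*M^2)*hF2 + M*M'*(s+1)*(1+2*s)*hs2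
  have r2 : F*dg - gv*df = M'/(2*s^2) := by
    rw [hgv, hdg, hdf]; field_simp
    linear_combination 2*M'*(2*s^2*(s+1) - 2*s*M^2)*hF2 + 4*M'*s*(s+1)*hs2
  have r2' : 2*s^2*(F*dg - gv*df) = M' := by
    rw [r2]; field_simp
  -- cast versions
  have hs0 : (s:ℂ) ≠ 0 := by exact_mod_cast hspos.ne'
  have hs1c : (s:ℂ) + 1 ≠ 0 := by
    have : ((s+1:ℝ):ℂ) ≠ 0 := by exact_mod_cast hs1.ne'
    push_cast at this; exact this
  have cr0 : (F:ℂ)^2 + (gv:ℂ)^2 = 1 := by exact_mod_cast r0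
  have cr3 : ((F:ℂ)^2 - (gv:ℂ)^2) * (s:ℂ) = 1 := by exact_mod_cast r3
  have cr4 : 2*(s:ℂ)*((F:ℂ)*(gv:ℂ)) = (M:ℂ) := by exact_mod_cast r4
  have cr1 : (F:ℂ)*(df:ℂ) + (gv:ℂ)*(dg:ℂ) = 0 := by exact_mod_cast r1
  have cr2 : 2*(s:ℂ)^2*((F:ℂ)*(dg:ℂ) - (gv:ℂ)*(df:ℂ)) = (M':ℂ) := by exact_mod_cast r2'
  have cs2c : (s:ℂ)^2 = (M:ℂ)^2 + 1 := by exact_mod_cast hs2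
  -- value of G x
  have hGval : G x = !![(F:ℂ), -Complex.I*(gv:ℂ); -Complex.I*(gv:ℂ), (F:ℂ)] := by
    rw [hG]
    show Gmat (m x) = _
    simp only [Gmat]
    rw [← hs, ← hF]
    ext i j
    fin_cases i <;> fin_cases j
    · simp [Matrix.smul_apply]
    · simp [Matrix.smul_apply, hgv]
      push_cast
      field_simp
      ring_nf
      rfl
    · simp [Matrix.smul_apply, hgv]
      push_cast
      field_simp
      ring_nf
      rfl
    · simp [Matrix.smul_apply]
  -- value of Gx x
  have e00 : deriv (fun x' => G x' 0 0) x = (df:ℂ) := by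
    have h1 : (fun x' => G x' 0 0)
        = fun x' => ((Real.sqrt ((Real.sqrt (m x' ^ 2 + 1) + 1) / (2 * Real.sqrt (m x' ^ 2 + 1))) : ℝ) : ℂ) := by
      funext x'; rw [hG]; simp [Gmat]
    rw [h1]; exact hfD.ofReal_comp.deriv
  have e01 : deriv (fun x' => G x' 0 1) x = -Complex.I * (dg:ℂ) := by
    have h1 : (fun x' => G x' 0 1)
        = fun x' => -Complex.I * ((Real.sqrt ((Real.sqrt (m x' ^ 2 + 1) + 1) / (2 * Real.sqrt (m x' ^ 2 + 1))) * m x' / (Real.sqrt (m x' ^ 2 + 1) + 1) : ℝ) : ℂ) := by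
      funext x'; rw [hG]; simp [Gmat]; push_cast; ring
    rw [h1]; exact ((hgD.ofReal_comp).const_mul (-Complex.I)).deriv
  have e10 : deriv (fun x' => G x' 1 0) x = -Complex.I * (dg:ℂ) := by
    have h1 : (fun x' => G x' 1 0)
        = fun x' => -Complex.I * ((Real.sqrt ((Real.sqrt (m x' ^ 2 + 1) + 1) / (2 * Real.sqrt (m x' ^ 2 + 1))) * m x' / (Real.sqrt (m x' ^ 2 + 1) + 1) : ℝ) : ℂ) := by
      funext x'; rw [hG]; simp [Gmat]; push_cast; ring
    rw [h1]; exact ((hgD.ofReal_comp).const_mul (-Complex.I)).deriv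
  have e11 : deriv (fun x' => G x' 1 1) x = (df:ℂ) := by
    have h1 : (fun x' => G x' 1 1)
        = fun x' => ((Real.sqrt ((Real.sqrt (m x' ^ 2 + 1) + 1) / (2 * Real.sqrt (m x' ^ 2 + 1))) : ℝ) : ℂ) := by
      funext x'; rw [hG]; simp [Gmat]
    rw [h1]; exact hfD.ofReal_comp.deriv
  have hGxval : Gx x = !![(df:ℂ), -Complex.I*(dg:ℂ); -Complex.I*(dg:ℂ), (df:ℂ)] := by
    rw [hGx]
    ext i j
    fin_cases i <;> fin_cases j
    · exact e00
    · exact e01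
    · exact e10
    · exact e11
  -- inverse of G x
  have hI : Complex.I ^ 2 = -1 := Complex.I_sq
  have hInv : (G x)⁻¹ = !![(F:ℂ), Complex.I*(gv:ℂ); Complex.I*(gv:ℂ), (F:ℂ)] := by
    apply Matrix.inv_eq_left_inv
    rw [hGval]
    ext i j
    fin_cases i <;> fin_cases j <;>
      simp [Matrix.mul_apply, Fin.sum_univ_two, Matrix.one_apply]
    · linear_combination cr0 - (gv:ℂ)^2*hI
    · ring
    · ring
    · linear_combination cr0 - (gv:ℂ)^2*hI
  rw [hInv, hGval, hGxval]
  exact keylemma (M:ℂ) (M':ℂ) (s:ℂ) (F:ℂ) (gv:ℂ) (df:ℂ) (dg:ℂ) k hk hs0 cr0 cr3 cr4 cr1 cr2 cs2c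
end

section
/- Let k₁ = e^{iα₁} = a₁ + i b₁ with a₁, b₁ real, a₁² + b₁² = 1, a₁ ≠ 0, b₁ ≠ 0. With c₁ = |c₁| e^{iC₁}, φ₁ = ψ₁ + iψ₂, |c₁| = (2b₁/a₁)·sgn(a₁), and C₁ + ψ₂ − α₁ = π/2, the solution of the 2×2 linear system f(−k₁) = 1 − (c₁ e^{φ₁}/(2k₁)) f(−k₁) + (conj(c₁) e^{conj(φ₁)}/(−k₁ + conj(k₁))) f(conj(k₁)), f(conj(k₁)) = 1 + (c₁ e^{φ₁}/(conj(k₁) − k₁)) f(−k₁) + (conj(c₁) e^{conj(φ₁)}/(2 conj(k₁))) f(conj(k₁)), is f(−k₁) = H₁ + H₂ and f(conj(k₁)) = H₁ − H₂, where H₁ = 1/(1 + e^{2ψ₁} + i(2b₁/a₁) sgn(a₁) e^{ψ₁}) and H₂ = sgn(a₁) e^{ψ₁}/(1 + e^{2ψ₁} + i(2b₁/a₁) sgn(a₁) e^{ψ₁}). -/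
/-!
The phase condition `C₁ + ψ₂ − α₁ = π/2` makes `c₁ e^{φ₁} = 2 i b₁ μ k₁` with the real number
`μ = sgn(a₁) e^{ψ₁} / a₁`. Dividing out, the system becomes
`(1 + i b₁ μ) F − μ k̄₁ G = 1`, `μ k₁ F + (1 + i b₁ μ) G = 1`, whose determinant is
`(1 + i b₁ μ)² + μ² k₁ k̄₁ = 1 + 2 i b₁ μ + a₁² μ² = 1 + e^{2ψ₁} + i (2b₁/a₁) sgn(a₁) e^{ψ₁}`;
it has positive real part, and Cramer's rule gives
`F, G = (1 ± a₁ μ) / det = (1 ± sgn(a₁) e^{ψ₁}) / det`.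
-/

open Complex
open ComplexConjugate

theorem ofReal_mul_exp_I_mul_mul_exp_eq {ρ C ψ ψ₂ α : ℝ} (h : C + ψ₂ - α = Real.pi / 2) :
    ρ * exp (I * C) * exp (ψ + I * ψ₂) = I * ↑(ρ * Real.exp ψ) * exp (I * α) := by
  have hC : I * C + (ψ + I * ψ₂) = ψ + I * α + Real.pi / 2 * I := by
    rw [show C = α + Real.pi / 2 - ψ₂ by linarith]; push_cast; ring
  rw [mul_assoc, ← exp_add, hC, exp_add, exp_add, exp_pi_div_two_mul_I]
  push_cast; ring

theorem one_add_exp_two_mul_add_I_mul_ne_zero (ψ y : ℝ) :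
    1 + exp (2 * ψ) + I * y * exp ψ ≠ 0 := by
  intro h
  rw [← ofReal_ofNat, ← ofReal_mul, ← ofReal_exp, ← ofReal_exp] at h
  have hre := congrArg re h
  simp only [add_re, one_re, ofReal_re, mul_re, I_re, I_im, ofReal_im, zero_mul, sub_zero,
    mul_zero, zero_re, add_zero] at hre
  linarith [Real.exp_pos (2 * ψ)]

theorem reduced_system_solution {a b μ F G : ℂ} (hD : 1 + 2 * I * b * μ + a ^ 2 * μ ^ 2 ≠ 0)
    (h₁ : F = 1 - I * b * μ * F + μ * (a - I * b) * G)
    (h₂ : G = 1 - μ * (a + I * b) * F - I * b * μ * G) :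
    F = (1 + a * μ) / (1 + 2 * I * b * μ + a ^ 2 * μ ^ 2) ∧
      G = (1 - a * μ) / (1 + 2 * I * b * μ + a ^ 2 * μ ^ 2) := by
  constructor <;> rw [eq_div_iff hD]
  · linear_combination (1 + I * b * μ) * h₁ + μ * (a - I * b) * h₂
  · linear_combination (1 + I * b * μ) * h₂ - μ * (a + I * b) * h₁

theorem soliton_system_solution {a b μ : ℝ} {k X F G : ℂ} (hb : b ≠ 0) (hk : k = a + I * b)
    (hX : X = I * (2 * b * μ) * k)
    (hD : 1 + 2 * I * b * μ + a ^ 2 * μ ^ 2 ≠ 0)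
    (h₁ : F = 1 - X / (2 * k) * F + conj X / (-k + conj k) * G)
    (h₂ : G = 1 + X / (conj k - k) * F + conj X / (2 * conj k) * G) :
    F = (1 + a * μ) / (1 + 2 * I * b * μ + a ^ 2 * μ ^ 2) ∧
      G = (1 - a * μ) / (1 + 2 * I * b * μ + a ^ 2 * μ ^ 2) := by
  have hb₀ : (b : ℂ) ≠ 0 := ofReal_ne_zero.mpr hb
  have hk₀ : k ≠ 0 := fun h ↦ hb (by simpa [hk] using congrArg im h)
  have hconj : conj k = a - I * b := by
    rw [hk]; simp only [map_add, map_mul, conj_ofReal, conj_I]; ring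
  have hdiff : conj k - k = -(2 * I * b) := by rw [hconj, hk]; ring
  have hX' : conj X = -(I * (2 * b * μ) * conj k) := by
    rw [hX]; simp only [map_mul, conj_I, conj_ofReal, map_ofNat]; ring
  have hc₁₁ : X / (2 * k) = I * b * μ := by rw [hX]; field_simp
  have hc₁₂ : conj X / (-k + conj k) = μ * (a - I * b) := by
    rw [hX', neg_add_eq_sub, hdiff, hconj]; field_simp
  have hc₂₁ : X / (conj k - k) = -(μ * (a + I * b)) := by rw [hX, hdiff, hk]; field_simp
  have hc₂₂ : conj X / (2 * conj k) = -(I * b * μ) := by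
    rw [hX']; field_simp [(map_ne_zero _).mpr hk₀]
  rw [hc₁₁, hc₁₂] at h₁
  rw [hc₂₁, hc₂₂] at h₂
  exact reduced_system_solution hD h₁ (by linear_combination h₂)

/-- One-soliton linear system for `|k₁| = 1`: with `k₁ = e^{iα₁} = a₁ + i b₁`,
`c₁ = |c₁| e^{iC₁}`, `φ₁ = ψ₁ + iψ₂`, `|c₁| = (2b₁/a₁)·sgn(a₁)` and
`C₁ + ψ₂ − α₁ = π/2`, the solution of the 2×2 linear system is
`f(−k₁) = H₁ + H₂`, `f(conj k₁) = H₁ − H₂`. -/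
theorem one_soliton_unit_circle (a₁ b₁ α₁ C₁ ψ₁ ψ₂ : ℝ)
    (ha₁ : a₁ ≠ 0) (hb₁ : b₁ ≠ 0)
    (k₁ : ℂ) (hk₁ : k₁ = Complex.exp (Complex.I * α₁))
    (hk₁' : k₁ = (a₁ : ℂ) + Complex.I * b₁)
    (sgn : ℝ) (hsgn : sgn = if 0 < a₁ then 1 else -1)
    (c₁ : ℂ) (hc₁ : c₁ = ((2 * b₁ / a₁) * sgn : ℝ) * Complex.exp (Complex.I * C₁))
    (φ₁ : ℂ) (hφ₁ : φ₁ = (ψ₁ : ℂ) + Complex.I * ψ₂)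
    (hphase : C₁ + ψ₂ - α₁ = Real.pi / 2)
    (F G : ℂ)
    (heq1 : F = 1 - (c₁ * Complex.exp φ₁ / (2 * k₁)) * F
              + ((starRingEnd ℂ) c₁ * Complex.exp ((starRingEnd ℂ) φ₁)
                  / (-k₁ + (starRingEnd ℂ) k₁)) * G)
    (heq2 : G = 1 + (c₁ * Complex.exp φ₁ / ((starRingEnd ℂ) k₁ - k₁)) * F
              + ((starRingEnd ℂ) c₁ * Complex.exp ((starRingEnd ℂ) φ₁)
                  / (2 * (starRingEnd ℂ) k₁)) * G)
    (H₁ H₂ : ℂ)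
    (hH₁ : H₁ = 1 / (1 + Complex.exp (2 * ψ₁)
              + Complex.I * ((2 * b₁ / a₁) * sgn : ℝ) * Complex.exp (ψ₁ : ℂ)))
    (hH₂ : H₂ = (sgn : ℂ) * Complex.exp (ψ₁ : ℂ) / (1 + Complex.exp (2 * ψ₁)
              + Complex.I * ((2 * b₁ / a₁) * sgn : ℝ) * Complex.exp (ψ₁ : ℂ))) :
    F = H₁ + H₂ ∧ G = H₁ - H₂ := by
  set μ : ℝ := sgn * Real.exp ψ₁ / a₁ with hμ
  have hs : (sgn : ℂ) ^ 2 = 1 := by rw [hsgn]; split_ifs <;> norm_num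
  have ha₀ : (a₁ : ℂ) ≠ 0 := ofReal_ne_zero.mpr ha₁
  have hX : c₁ * exp φ₁ = I * (2 * b₁ * μ) * k₁ := by
    rw [hc₁, hφ₁, ofReal_mul_exp_I_mul_mul_exp_eq hphase, ← hk₁, hμ]
    push_cast; field_simp
  have hden : (1 + 2 * I * b₁ * μ + a₁ ^ 2 * μ ^ 2 : ℂ) = 1 + exp (2 * ψ₁)
      + I * ((2 * b₁ / a₁) * sgn : ℝ) * exp (ψ₁ : ℂ) := by
    rw [two_mul (ψ₁ : ℂ), exp_add, hμ]; push_cast; field_simp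
    linear_combination (a₁ : ℂ) * exp (ψ₁ : ℂ) ^ 2 * hs
  rw [exp_conj, ← map_mul] at heq1 heq2
  obtain ⟨hF, hG⟩ := soliton_system_solution hb₁ hk₁' hX
    (hden ▸ one_add_exp_two_mul_add_I_mul_ne_zero ψ₁ _) heq1 heq2
  rw [hF, hG, hH₁, hH₂, hden, ← add_div, div_sub_div_same, hμ]
  push_cast; constructor <;> field_simp
end
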